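/- If G is a positive finite simple graph and H is any finite looped-simple graph (a graph that may have loops at some vertices), then the categorical product G × H is positive. Here G × H has vertex set V(G) × V(H), and (i₁,i₂)(j₁,j₂) is an edge if and only if i₁j₁ ∈ E(G) and i₂j₂ ∈ E(H). -/

import Mathlib

open MeasureTheory

noncomputable section

/-- The unit interval `[0,1]` as a measure space. -/
abbrev UI : Type := Set.Icc (0:ℝ) 1

/-- A kernel is a symmetric bounded measurable function `[0,1]² → ℝ`. -/
def IsKernel (W : UI → UI → ℝ) : Prop :=
  Measurable (Function.uncurry W) ∧ (∀ x y, W x y = W y x) ∧ ∃ C : ℝ, ∀ x y, |W x y| ≤ C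

open scoped Classical in
/-- The homomorphism density `t(G,W) = ∫_{[0,1]^V} ∏_{(a,b)∈E} W(p(a),p(b)) dp`. -/
noncomputable def homDensity {V : Type} [Fintype V] (G : SimpleGraph V) (W : UI → UI → ℝ) : ℝ :=
  ∫ p : V → UI, ∏ e ∈ G.edgeFinset, W (p (Quot.out e).1) (p (Quot.out e).2)

/-- A graph is positive if `t(G,W) ≥ 0` for every kernel `W`. -/
def Positive {V : Type} [Fintype V] (G : SimpleGraph V) : Prop :=
  ∀ W : UI → UI → ℝ, IsKernel W → 0 ≤ homDensity G W


/-- The categorical product of a simple graph `G` with a looped-simple graph given by a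
symmetric relation `R`: `(i₁,i₂)(j₁,j₂)` is an edge iff `i₁j₁ ∈ E(G)` and `i₂j₂ ∈ E(H)`. -/
def catProd {V₁ V₂ : Type} (G : SimpleGraph V₁) (R : V₂ → V₂ → Prop) (hR : Symmetric R) :
    SimpleGraph (V₁ × V₂) where
  Adj a b := G.Adj a.1 b.1 ∧ R a.2 b.2
  symm := ⟨fun a b hab => ⟨hab.1.symm, hR hab.2⟩⟩
  loopless := ⟨fun a ha => G.irrefl ha.1⟩

/-!
Let `φ : [0,1] → [0,1]^{V₂}` be measure preserving. Substituting `p(i, u) = φ(q(i))_u` in the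
integral defining `t(G × H, W)` and grouping the edges of `G × H` by their projection to `G`
gives `t(G × H, W) = t(G, W')` with `W'(x, y) = ∏_{u v ∈ E(H)} W(φ(x)_u, φ(y)_v)`, where each
edge `uv` with `u ≠ v` is counted in both orientations. Since `W'` is again a kernel,
positivity of `G` gives `t(G, W') ≥ 0`.
-/

open Finset

lemma Sym2.lift_eq_out {α β : Type*} (f : {f : α → α → β // ∀ a b, f a b = f b a}) (e : Sym2 α) :
    Sym2.lift f e = f.1 e.out.1 e.out.2 := by
  conv_lhs => rw [← e.out_eq]
  rfl

section relProd

variable {α β M : Type*} [Fintype β] [CommMonoid M]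

def relProd (R : β → β → Prop) [DecidableRel R] (f : α × β → α × β → M) (a b : α) : M :=
  ∏ uv : β × β with R uv.1 uv.2, f (a, uv.1) (b, uv.2)

lemma relProd_comm {R : β → β → Prop} [DecidableRel R] (hR : Symmetric R)
    {f : α × β → α × β → M} (hf : ∀ x y, f x y = f y x) (a b : α) :
    relProd R f a b = relProd R f b a :=
  prod_nbij' Prod.swap Prod.swap (fun uv huv => by simpa using hR (by simpa using huv))
    (fun uv huv => by simpa using hR (by simpa using huv)) (by simp) (by simp)
    (fun uv _ => hf _ _)

end relProd

section catProd

variable {V₁ V₂ : Type} (G : SimpleGraph V₁) {R : V₂ → V₂ → Prop} (hR : Symmetric R)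

@[simp]
lemma catProd_adj {x y : V₁ × V₂} : (catProd G R hR).Adj x y ↔ G.Adj x.1 y.1 ∧ R x.2 y.2 :=
  Iff.rfl

lemma prod_edgeFinset_catProd {M : Type*} [CommMonoid M] [Fintype V₂] [DecidableRel R]
    [Fintype G.edgeSet] [Fintype (catProd G R hR).edgeSet]
    (f : V₁ × V₂ → V₁ × V₂ → M) (hf : ∀ x y, f x y = f y x) :
    ∏ e ∈ (catProd G R hR).edgeFinset, Sym2.lift ⟨f, hf⟩ e =
      ∏ e ∈ G.edgeFinset, Sym2.lift ⟨relProd R f, relProd_comm hR hf⟩ e := by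
  classical
  rw [← prod_fiberwise_of_maps_to (g := Sym2.map Prod.fst) (t := G.edgeFinset)]
  swap
  · intro e he
    induction e using Sym2.ind with
    | _ x y =>
      simp only [SimpleGraph.mem_edgeFinset, SimpleGraph.mem_edgeSet, catProd_adj,
        Sym2.map_mk] at he ⊢
      exact he.1
  refine prod_congr rfl fun e he => ?_
  induction e using Sym2.ind with
  | _ a b =>
  have hab : G.Adj a b := by simpa using he
  -- the fibre over `s(a, b)` is `{s((a, u), (b, v)) | R u v}`, injectively since `a ≠ b`
  refine (prod_bij (fun uv _ => s((a, uv.1), (b, uv.2))) ?_ ?_ ?_ fun _ _ => rfl).symm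
  · intro uv huv
    simp_all
  · intro uv huv uv' huv' h
    simp only [Sym2.eq_iff, Prod.mk.injEq] at h
    rcases h with ⟨⟨-, h₁⟩, -, h₂⟩ | ⟨⟨rfl, -⟩, -⟩
    · exact Prod.ext h₁ h₂
    · exact absurd hab (G.loopless.irrefl a)
  · intro ep hep
    induction ep using Sym2.ind with
    | _ x y =>
    simp only [mem_filter, SimpleGraph.mem_edgeFinset, SimpleGraph.mem_edgeSet, catProd_adj,
      Sym2.map_mk, Sym2.eq_iff] at hep
    obtain ⟨⟨-, hxy⟩, ⟨rfl, rfl⟩ | ⟨rfl, rfl⟩⟩ := hep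
    · exact ⟨(x.2, y.2), by simpa using hxy, rfl⟩
    · exact ⟨(y.2, x.2), by simpa using hR hxy, Sym2.eq_swap⟩

end catProd

lemma measurePreserving_uncurry (ι κ X : Type*) [Fintype ι] [Fintype κ] [MeasureSpace X]
    [SigmaFinite (volume : Measure X)] :
    MeasurePreserving (Function.uncurry : (ι → κ → X) → ι × κ → X) volume volume where
  measurable := measurable_uncurry
  map_eq := by
    refine (Measure.pi_eq fun s hs => ?_).symm
    have hpre : Function.uncurry ⁻¹' Set.univ.pi s =
        Set.univ.pi fun i => Set.univ.pi fun j => s (i, j) := by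
      ext; simp
    simp only [Measure.map_apply measurable_uncurry (MeasurableSet.univ_pi hs), hpre, volume_pi,
      Measure.pi_pi, Fintype.prod_prod_type]

section kernel

variable {V₁ V₂ : Type} [Fintype V₁] [Fintype V₂] {R : V₂ → V₂ → Prop} [DecidableRel R]
  {W : UI → UI → ℝ} {φ : UI → V₂ → UI}

def relKernel (R : V₂ → V₂ → Prop) [DecidableRel R] (φ : UI → V₂ → UI) (W : UI → UI → ℝ) :
    UI → UI → ℝ :=
  relProd R fun s t => W (φ s.1 s.2) (φ t.1 t.2)

lemma isKernel_relKernel (hR : Symmetric R) (hW : IsKernel W) (hφ : Measurable φ) :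
    IsKernel (relKernel R φ W) := by
  obtain ⟨hWm, hWs, C, hWC⟩ := hW
  refine ⟨?_, relProd_comm hR fun _ _ => hWs _ _, C ^ #{uv : V₂ × V₂ | R uv.1 uv.2}, ?_⟩
  · change Measurable fun x : UI × UI =>
      ∏ uv : V₂ × V₂ with R uv.1 uv.2, W (φ x.1 uv.1) (φ x.2 uv.2)
    fun_prop
  · intro x y
    calc |relKernel R φ W x y| = ∏ uv : V₂ × V₂ with R uv.1 uv.2, |W (φ x uv.1) (φ y uv.2)| :=
          abs_prod _ _
      _ ≤ ∏ uv : V₂ × V₂ with R uv.1 uv.2, C :=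
          prod_le_prod (fun _ _ => abs_nonneg _) fun _ _ => hWC _ _
      _ = _ := prod_const C

lemma homDensity_catProd (G : SimpleGraph V₁) (hR : Symmetric R)
    (hWm : Measurable (Function.uncurry W)) (hWs : ∀ x y, W x y = W y x)
    (hφ : MeasurePreserving φ volume volume) :
    homDensity (catProd G R hR) W = homDensity G (relKernel R φ W) := by
  classical
  have hψ : MeasurePreserving (fun p : V₁ → UI => Function.uncurry fun a => φ (p a)) :=
    (measurePreserving_uncurry V₁ V₂ UI).comp (volume_preserving_pi fun _ => hφ)
  unfold homDensity
  rw [← hψ.map_eq, integral_map hψ.aemeasurable]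
  · refine integral_congr_ae (ae_of_all _ fun p => ?_)
    have hf (x y : V₁ × V₂) :
        W (φ (p x.1) x.2) (φ (p y.1) y.2) = W (φ (p y.1) y.2) (φ (p x.1) x.2) :=
      hWs _ _
    have := prod_edgeFinset_catProd G hR _ hf
    simp only [Sym2.lift_eq_out] at this
    exact this
  · exact Measurable.aestronglyMeasurable (by fun_prop)

end kernel

theorem positive_catProd {V₁ V₂ : Type} [Fintype V₁] [Fintype V₂] (G : SimpleGraph V₁)
    (R : V₂ → V₂ → Prop) (hR : Symmetric R) (h : Positive G) :
    Positive (catProd G R hR) := by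
  classical
  intro W hW
  obtain ⟨φ, hφm, hφ⟩ := (volume : Measure (V₂ → UI)).exists_measurable_map_eq
  rw [homDensity_catProd G hR hW.1 hW.2.1 ⟨hφm, hφ⟩]
  exact h _ (isKernel_relKernel hR hW hφm)
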